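/- Let m be a Herglotz function, and let a, b ∈ 𝒜₂ be such that a_{1,1} + a_{1,2}m(z) ≠ 0 and b_{1,1} + b_{1,2}m(z) ≠ 0 for all z ∈ ℂ₊, with m_a(z) = (a_{2,1} + a_{2,2}m(z))/(a_{1,1} + a_{1,2}m(z)) and m_b defined analogously. Assume m_a is not a constant function on ℂ₊. Then m_a(z) = m_b(z) for all z ∈ ℂ₊ if and only if a = γ·b for some γ ∈ ℂ with |γ| = 1. -/

import Mathlib

/-!
Write `a·w = (a₂₁ + a₂₂ w) / (a₁₁ + a₁₂ w)` (`linFrac a w`), so that `m_a = a·m`.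
Elements of `𝒜₂` have unimodular determinant, so `c = a b⁻¹` exists, and `a·w = c·(b·w)`
whenever `b·w` is defined. Hence `m_a = m_b` makes every value of `m_a` a fixed point of `c`.
Being continuous and non-constant on the connected set `ℂ₊`, `m_a` takes infinitely many values,
while the fixed points of a non-scalar `c` are the roots of a nonzero polynomial of degree at most
two. So `c = γ • 1`, and `a = γ • b` with `a, b ∈ 𝒜₂` forces `|γ|² = 1`.
-/

open Matrix

section LinFrac

variable {K : Type*} [Field K]

def linFrac (M : Matrix (Fin 2) (Fin 2) K) (w : K) : K :=
  (M 1 0 + M 1 1 * w) / (M 0 0 + M 0 1 * w)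

theorem linFrac_smul {γ : K} (hγ : γ ≠ 0) (M : Matrix (Fin 2) (Fin 2) K) (w : K) :
    linFrac (γ • M) w = linFrac M w := by
  simp only [linFrac, Matrix.smul_apply, smul_eq_mul, mul_assoc, ← mul_add,
    mul_div_mul_left _ _ hγ]

theorem fixedPoint_of_linFrac_mul_eq {a b c : Matrix (Fin 2) (Fin 2) K} (hcb : c * b = a) {w : K}
    (ha : a 0 0 + a 0 1 * w ≠ 0) (hb : b 0 0 + b 0 1 * w ≠ 0) (h : linFrac a w = linFrac b w) :
    c 1 0 + c 1 1 * linFrac b w = linFrac b w * (c 0 0 + c 0 1 * linFrac b w) := by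
  unfold linFrac at *
  generalize hx : b 0 0 + b 0 1 * w = x at *
  generalize hy : b 1 0 + b 1 1 * w = y at *
  have hden : a 0 0 + a 0 1 * w = c 0 0 * x + c 0 1 * y := by
    simp only [← hcb, mul_apply, Fin.sum_univ_two, ← hx, ← hy]; ring
  have hnum : a 1 0 + a 1 1 * w = c 1 0 * x + c 1 1 * y := by
    simp only [← hcb, mul_apply, Fin.sum_univ_two, ← hx, ← hy]; ring
  rw [hden, hnum, div_eq_div_iff (hden ▸ ha) hb] at h
  field_simp
  linear_combination h

open Polynomial in
theorem eq_smul_one_of_infinite_fixedPoints {c : Matrix (Fin 2) (Fin 2) K} {S : Set K}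
    (hS : S.Infinite) (hfix : ∀ t ∈ S, c 1 0 + c 1 1 * t = t * (c 0 0 + c 0 1 * t)) :
    c = c 0 0 • 1 := by
  set P : K[X] := C (c 0 1) * X ^ 2 + C (c 0 0 - c 1 1) * X - C (c 1 0)
  have hP : P = 0 := P.eq_zero_of_infinite_isRoot <| hS.mono fun t ht => by
    simp only [Set.mem_ofPred_eq, IsRoot, P, eval_sub, eval_add, eval_mul, eval_C, eval_pow, eval_X]
    linear_combination -hfix t ht
  have h0 := congrArg (coeff · 0) hP
  have h1 := congrArg (coeff · 1) hP
  have h2 := congrArg (coeff · 2) hP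
  simp [P, coeff_X] at h0 h1 h2
  ext i j
  fin_cases i <;> fin_cases j <;> simp [h0, h2, sub_eq_zero.mp h1]

end LinFrac

theorem isUnit_det_of_conjTranspose_mul_mul_eq {n R : Type*} [Fintype n] [DecidableEq n]
    [CommRing R] [StarRing R] {b J : Matrix n n R} (hJ : IsUnit J.det) (hb : bᴴ * J * b = J) :
    IsUnit b.det := by
  have hdet := congrArg det hb
  rw [det_mul, det_mul] at hdet
  exact isUnit_of_mul_isUnit_right (hdet ▸ hJ)

theorem norm_eq_one_of_smul_conjTranspose_mul_mul_eq {n 𝕜 : Type*} [Fintype n] [RCLike 𝕜]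
    {b J : Matrix n n 𝕜} {γ : 𝕜} (hJ : J ≠ 0) (hb : bᴴ * J * b = J)
    (hγb : (γ • b)ᴴ * J * (γ • b) = J) : ‖γ‖ = 1 := by
  simp only [conjTranspose_smul, Matrix.smul_mul, Matrix.mul_smul, smul_smul, hb,
    RCLike.star_def, RCLike.mul_conj] at hγb
  have hsq : (‖γ‖ : 𝕜) ^ 2 - 1 = 0 :=
    (smul_eq_zero.mp (by rw [sub_smul, hγb, one_smul, sub_self])).resolve_right hJ
  have hsq' : ‖γ‖ ^ 2 = 1 := by exact_mod_cast sub_eq_zero.mp hsq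
  exact (pow_eq_one_iff_of_nonneg (norm_nonneg γ) two_ne_zero).mp hsq'

theorem fractional_transform_eq_iff_unimodular_multiple_general
    (m : ℂ → ℂ)
    (hanal : DifferentiableOn ℂ m {z : ℂ | 0 < z.im})
    (a b : Matrix (Fin 2) (Fin 2) ℂ)
    (ha : aᴴ * !![0, -1; 1, 0] * a = !![0, -1; 1, 0])
    (hb : bᴴ * !![0, -1; 1, 0] * b = !![0, -1; 1, 0])
    (hda : ∀ z : ℂ, 0 < z.im → a 0 0 + a 0 1 * m z ≠ 0)
    (hdb : ∀ z : ℂ, 0 < z.im → b 0 0 + b 0 1 * m z ≠ 0)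
    (hnc : ¬ ∃ c : ℂ, ∀ z : ℂ, 0 < z.im →
      (a 1 0 + a 1 1 * m z) / (a 0 0 + a 0 1 * m z) = c) :
    (∀ z : ℂ, 0 < z.im →
        (a 1 0 + a 1 1 * m z) / (a 0 0 + a 0 1 * m z) =
          (b 1 0 + b 1 1 * m z) / (b 0 0 + b 0 1 * m z)) ↔
      ∃ γ : ℂ, ‖γ‖ = 1 ∧ a = γ • b := by
  set H := {z : ℂ | 0 < z.im}
  constructor
  · intro h
    have hcb : a * b⁻¹ * b = a := nonsing_inv_mul_cancel_right b a <|
      isUnit_det_of_conjTranspose_mul_mul_eq (by simp [det_fin_two_of]) hb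
    set c := a * b⁻¹
    have hnontriv : (linFrac b ∘ m '' H).Nontrivial := by
      refine Set.not_subsingleton_iff.mp fun hs => hnc ⟨linFrac b (m Complex.I), fun z hz => ?_⟩
      rw [h z hz]
      exact hs (Set.mem_image_of_mem _ hz) (Set.mem_image_of_mem _ (by simp [H]))
    have hcont : ContinuousOn (linFrac b ∘ m) H :=
      (continuousOn_const.add (continuousOn_const.mul hanal.continuousOn)).div
        (continuousOn_const.add (continuousOn_const.mul hanal.continuousOn)) hdb
    have hinf := ((convex_halfSpace_im_gt 0).isPreconnected.image _ hcont).infinite_of_nontrivial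
      hnontriv
    have hc : c = c 0 0 • 1 := eq_smul_one_of_infinite_fixedPoints hinf <| by
      rintro _ ⟨z, hz, rfl⟩
      exact fixedPoint_of_linFrac_mul_eq hcb (hda z hz) (hdb z hz) (h z hz)
    have hab : a = c 0 0 • b := by rw [← hcb]; nth_rw 1 [hc]; rw [smul_mul, one_mul]
    exact ⟨c 0 0, norm_eq_one_of_smul_conjTranspose_mul_mul_eq
      (fun hJ => by simpa using congrFun₂ hJ 1 0) hb (hab ▸ ha), hab⟩
  · rintro ⟨γ, hγ, rfl⟩ z _
    exact linFrac_smul (norm_ne_zero_iff.mp (hγ ▸ one_ne_zero)) b (m z)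

/-- If `m` is a Herglotz function, `a, b ∈ 𝒜₂` with nonvanishing denominators
`a₁₁ + a₁₂ m(z)` and `b₁₁ + b₁₂ m(z)` on `ℂ₊`, and `m_a` is not constant, then
`m_a = m_b` on `ℂ₊` if and only if `a = γ b` for some unimodular `γ ∈ ℂ`. -/
theorem fractional_transform_eq_iff_unimodular_multiple
    (m : ℂ → ℂ)
    (hanal : DifferentiableOn ℂ m {z : ℂ | 0 < z.im})
    (hmap : ∀ z : ℂ, 0 < z.im → 0 < (m z).im)
    (a b : Matrix (Fin 2) (Fin 2) ℂ)
    (ha : aᴴ * !![0, -1; 1, 0] * a = !![0, -1; 1, 0])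
    (hb : bᴴ * !![0, -1; 1, 0] * b = !![0, -1; 1, 0])
    (hda : ∀ z : ℂ, 0 < z.im → a 0 0 + a 0 1 * m z ≠ 0)
    (hdb : ∀ z : ℂ, 0 < z.im → b 0 0 + b 0 1 * m z ≠ 0)
    (hnc : ¬ ∃ c : ℂ, ∀ z : ℂ, 0 < z.im →
      (a 1 0 + a 1 1 * m z) / (a 0 0 + a 0 1 * m z) = c) :
    (∀ z : ℂ, 0 < z.im →
        (a 1 0 + a 1 1 * m z) / (a 0 0 + a 0 1 * m z) =
          (b 1 0 + b 1 1 * m z) / (b 0 0 + b 0 1 * m z)) ↔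
      ∃ γ : ℂ, ‖γ‖ = 1 ∧ a = γ • b :=
  fractional_transform_eq_iff_unimodular_multiple_general m hanal a b ha hb hda hdb hnc
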